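/- Let n ≥ 1 and let S be a real n×n matrix with S_{ii} > 0 for all i, S_{ij} ≤ 0 for all i ≠ j, and Σ_j S_{ij} > 0 for every row i. Let f(x) = x(x−1)(2x−1)/2, let μ > 0, and let 0 < τ ≤ 2. Suppose U, V ∈ ℝⁿ satisfy the semi-implicit scheme V_i + μ Σ_j S_{ij} V_j = U_i − τ f(U_i) for every i, and 0 ≤ U_j ≤ 1 for all j. Then 0 ≤ V_j ≤ 1 for all j. -/
import Mathlib


/-- `f(u) = u(u-1)(2u-1)/2`, the derivative of the double-well potential `F(u) = u²(u-1)²/4`. -/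
noncomputable def fAC (x : ℝ) : ℝ := x * (x - 1) * (2 * x - 1) / 2

lemma gAC_bounds (u τ : ℝ) (hu0 : 0 ≤ u) (hu1 : u ≤ 1) (hτ0 : 0 < τ) (hτ2 : τ ≤ 2) :
    0 ≤ u - τ * fAC u ∧ u - τ * fAC u ≤ 1 := by
  unfold fAC
  have h2τ : (0:ℝ) ≤ 2 - τ := by linarith
  have h3 : (0:ℝ) ≤ 3 - 2*u := by linarith
  constructor
  · nlinarith [mul_nonneg hτ0.le (mul_nonneg (mul_nonneg hu0 hu0) h3),
      mul_nonneg h2τ hu0]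
  · nlinarith [mul_nonneg hτ0.le (mul_nonneg (sq_nonneg (1 - u)) (by linarith : (0:ℝ) ≤ 1 + 2*u)),
      mul_nonneg h2τ (by linarith : (0:ℝ) ≤ 1 - u)]

theorem stmt18 (n : ℕ) (hn : 1 ≤ n) (S : Matrix (Fin n) (Fin n) ℝ)
    (hdiag : ∀ i, 0 < S i i) (hoff : ∀ i j, i ≠ j → S i j ≤ 0)
    (hrow : ∀ i, 0 < ∑ j, S i j)
    (μ : ℝ) (hμ : 0 < μ) (τ : ℝ) (hτ0 : 0 < τ) (hτ2 : τ ≤ 2)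
    (U V : Fin n → ℝ)
    (hscheme : ∀ i, V i + μ * ∑ j, S i j * V j = U i - τ * fAC (U i))
    (hU : ∀ j, 0 ≤ U j ∧ U j ≤ 1) :
    ∀ j, 0 ≤ V j ∧ V j ≤ 1 := by
  have hne : (Finset.univ : Finset (Fin n)).Nonempty :=
    ⟨⟨0, hn⟩, Finset.mem_univ _⟩
  obtain ⟨i, -, hi⟩ := Finset.exists_max_image Finset.univ V hne
  obtain ⟨k, -, hk⟩ := Finset.exists_min_image Finset.univ V hne
  have hgi := gAC_bounds (U i) τ (hU i).1 (hU i).2 hτ0 hτ2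
  have hgk := gAC_bounds (U k) τ (hU k).1 (hU k).2 hτ0 hτ2
  -- upper bound at the max index
  have hsum_i : (V i) * ∑ j, S i j ≤ ∑ j, S i j * V j := by
    rw [Finset.mul_sum]
    refine Finset.sum_le_sum fun j _ => ?_
    rcases eq_or_ne i j with rfl | hij
    · ring_nf; rfl
    · have h1 : S i j ≤ 0 := hoff i j hij
      have h2 : V j ≤ V i := hi j (Finset.mem_univ _)
      nlinarith
  have hVi : V i ≤ 1 := by
    have h := hscheme i
    have hμs : 0 < μ * ∑ j, S i j := mul_pos hμ (hrow i)
    nlinarith [hgi.2, mul_le_mul_of_nonneg_left hsum_i hμ.le]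
  -- lower bound at the min index
  have hsum_k : ∑ j, S k j * V j ≤ (V k) * ∑ j, S k j := by
    rw [Finset.mul_sum]
    refine Finset.sum_le_sum fun j _ => ?_
    rcases eq_or_ne k j with rfl | hkj
    · ring_nf; rfl
    · have h1 : S k j ≤ 0 := hoff k j hkj
      have h2 : V k ≤ V j := hk j (Finset.mem_univ _)
      nlinarith
  have hVk : 0 ≤ V k := by
    have h := hscheme k
    have hμs : 0 < μ * ∑ j, S k j := mul_pos hμ (hrow k)
    nlinarith [hgk.1, mul_le_mul_of_nonneg_left hsum_k hμ.le]
  exact fun j => ⟨le_trans hVk (hk j (Finset.mem_univ _)),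
    le_trans (hi j (Finset.mem_univ _)) hVi⟩
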